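/- Let k̄ > 0, ρ ∈ (−1,1), σ > 0, γ > 0, and Φ the standard normal CDF. The function h(x) = (k̄/2)(−x(1 − Φ(√2x/(√(1−ρ)σ))) + (σ√(1−ρ)/√2)Φ'(√2x/(√(1−ρ)σ))) − 2γx has a unique positive root. -/

import Mathlib

open Real
open MeasureTheory

noncomputable def stdPhi (x : ℝ) : ℝ := ∫ t in Set.Iic x, Real.exp (-t^2/2) / Real.sqrt (2*Real.pi)

noncomputable def stdPhi' (x : ℝ) : ℝ := Real.exp (-x^2/2) / Real.sqrt (2*Real.pi)

/-!
With `d = σ √(1 - ρ) / √2` the function is `h x = (k/2) · d · L (x / d) - 2 γ x`, where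
`L z = Φ' z - z (1 - Φ z)` is the standard normal loss function. Since `L' = Φ - 1 ≤ 0`, the
first term is antitone and positive at `0`, while `2 γ x` is strictly increasing and unbounded,
so the intermediate value theorem gives exactly one positive crossing.
-/

lemma stdPhi'_pos (x : ℝ) : 0 < stdPhi' x := by
  unfold stdPhi'
  positivity

lemma continuous_stdPhi' : Continuous stdPhi' := by
  unfold stdPhi'
  fun_prop

lemma integrable_stdPhi' : Integrable stdPhi' := by
  refine ((integrable_exp_neg_mul_sq (b := 1/2) (by norm_num)).div_const
    (Real.sqrt (2*Real.pi))).congr (Filter.Eventually.of_forall fun t => ?_)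
  unfold stdPhi'
  ring_nf

lemma integral_stdPhi' : ∫ t, stdPhi' t = 1 := by
  have hexp : ∀ t, stdPhi' t = Real.exp (-(1/2) * t ^ 2) / Real.sqrt (2*Real.pi) := fun t => by
    unfold stdPhi'
    ring_nf
  simp_rw [hexp, integral_div, integral_gaussian]
  rw [show Real.pi / (1/2) = 2 * Real.pi by ring]
  exact div_self (by positivity)

lemma stdPhi_le_one (x : ℝ) : stdPhi x ≤ 1 :=
  integral_stdPhi' ▸ setIntegral_le_integral integrable_stdPhi'
    (Filter.Eventually.of_forall fun t => (stdPhi'_pos t).le)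

lemma hasDerivAt_stdPhi (x : ℝ) : HasDerivAt stdPhi (stdPhi' x) x := by
  have hsplit : stdPhi = fun u => stdPhi 0 + ∫ t in (0:ℝ)..u, stdPhi' t := by
    funext u
    have := intervalIntegral.integral_Iic_sub_Iic
      integrable_stdPhi'.integrableOn integrable_stdPhi'.integrableOn (a := 0) (b := u)
    unfold stdPhi stdPhi' at *
    linarith
  rw [hsplit]
  simpa using (intervalIntegral.integral_hasDerivAt_right integrable_stdPhi'.intervalIntegrable
    (continuous_stdPhi'.stronglyMeasurableAtFilter _ _)
    continuous_stdPhi'.continuousAt).const_add (stdPhi 0)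

lemma hasDerivAt_stdPhi' (x : ℝ) : HasDerivAt stdPhi' (-x * stdPhi' x) x := by
  have hquad : HasDerivAt (fun t : ℝ => -t^2/2) (-x) x := by
    simpa using ((hasDerivAt_pow 2 x).neg.div_const 2).congr_deriv (by ring)
  unfold stdPhi'
  exact (hquad.exp.div_const (Real.sqrt (2*Real.pi))).congr_deriv (by ring)

noncomputable def stdLoss (z : ℝ) : ℝ := stdPhi' z - z * (1 - stdPhi z)

lemma hasDerivAt_stdLoss (z : ℝ) : HasDerivAt stdLoss (stdPhi z - 1) z := by
  have := (hasDerivAt_stdPhi' z).sub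
    ((hasDerivAt_id z).mul ((hasDerivAt_const z (1:ℝ)).sub (hasDerivAt_stdPhi z)))
  exact this.congr_deriv (by simp only [id_eq, Pi.sub_apply]; ring)

@[fun_prop]
lemma continuous_stdLoss : Continuous stdLoss :=
  continuous_iff_continuousAt.mpr fun z => (hasDerivAt_stdLoss z).continuousAt

lemma antitone_stdLoss : Antitone stdLoss :=
  antitone_of_deriv_nonpos (fun z => (hasDerivAt_stdLoss z).differentiableAt) fun z => by
    rw [(hasDerivAt_stdLoss z).deriv]
    linarith [stdPhi_le_one z]

lemma stdLoss_zero_pos : 0 < stdLoss 0 := by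
  simpa [stdLoss] using stdPhi'_pos 0

lemma existsUnique_pos_eq_mul_of_antitone {g : ℝ → ℝ} {b : ℝ} (hg : Continuous g)
    (hg_anti : Antitone g) (hg0 : 0 < g 0) (hb : 0 < b) :
    ∃! x : ℝ, 0 < x ∧ g x = b * x := by
  set x₀ : ℝ := g 0 / b + 1
  have hx₀ : 0 < x₀ := by positivity
  have hbx₀ : b * x₀ = g 0 + b := by rw [mul_add, mul_div_cancel₀ _ hb.ne', mul_one]
  obtain ⟨x, hx, hgx⟩ : (0:ℝ) ∈ (fun x => g x - b * x) '' Set.Icc 0 x₀ :=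
    intermediate_value_Icc' hx₀.le (by fun_prop)
      ⟨by linarith [hg_anti hx₀.le], by simpa using hg0.le⟩
  simp only [sub_eq_zero] at hgx
  have hxpos : 0 < x := hx.1.lt_of_ne (by rintro rfl; simp at hgx; linarith)
  refine ⟨x, ⟨hxpos, hgx⟩, fun y ⟨_, hy⟩ => ?_⟩
  rcases lt_trichotomy y x with hyx | hyx | hyx
  · nlinarith [hg_anti hyx.le]
  · exact hyx
  · nlinarith [hg_anti hyx.le]

/-- In the symmetric half-linear game with slope `k̄`, correlation `ρ` and fee `γ`,
the function `h` has a unique positive root. -/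
theorem half_linear_unique_root (k ρ σ γ : ℝ) (hk : 0 < k)
    (hρ : ρ ∈ Set.Ioo (-1 : ℝ) 1) (hσ : 0 < σ) (hγ : 0 < γ) :
    ∃! x : ℝ, 0 < x ∧
      (k/2) * (-x * (1 - stdPhi (Real.sqrt 2 * x / (Real.sqrt (1 - ρ) * σ))) +
        (σ * Real.sqrt (1 - ρ) / Real.sqrt 2) *
          stdPhi' (Real.sqrt 2 * x / (Real.sqrt (1 - ρ) * σ))) - 2 * γ * x = 0 := by
  have hρ' : 0 < Real.sqrt (1 - ρ) := Real.sqrt_pos.mpr (by linarith [hρ.2])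
  set d := σ * Real.sqrt (1 - ρ) / Real.sqrt 2
  have hd : 0 < d := by positivity
  have hscale : ∀ x, Real.sqrt 2 * x / (Real.sqrt (1 - ρ) * σ) = x / d := fun x => by
    simp only [d]
    field_simp
  have hroot : ∀ x, (k/2) * (-x * (1 - stdPhi (x / d)) + d * stdPhi' (x / d)) - 2 * γ * x = 0 ↔
      k / 2 * (d * stdLoss (x / d)) = 2 * γ * x := fun x => by
    have hloss : d * stdLoss (x / d) = -x * (1 - stdPhi (x / d)) + d * stdPhi' (x / d) := by
      rw [stdLoss, mul_sub, ← mul_assoc d, mul_div_cancel₀ x hd.ne']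
      ring
    rw [hloss, sub_eq_zero]
  have hanti : Antitone fun x => k / 2 * (d * stdLoss (x / d)) := fun x y hxy =>
    mul_le_mul_of_nonneg_left (mul_le_mul_of_nonneg_left
      (antitone_stdLoss (div_le_div_of_nonneg_right hxy hd.le)) hd.le) (by positivity)
  simp_rw [hscale, hroot]
  exact existsUnique_pos_eq_mul_of_antitone (by fun_prop) hanti
    (by simpa using mul_pos (half_pos hk) (mul_pos hd stdLoss_zero_pos)) (by positivity)
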